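/- If a Banach space X contains a subspace isomorphic to ℓ₁, then R(X) = 2. In particular R(ℓ₁) = 2, where R(X) = sup over sequences (x_n) in B_X of inf over convex block subsequences (z_n) of ca((z_n)). -/

import Mathlib

open Filter Topology Metric Set NormedSpace

noncomputable section

/-- `y` is a convex block subsequence of `x`. -/
def IsConvexBlock {E : Type*} [AddCommGroup E] [Module ℝ E] (x y : ℕ → E) : Prop :=
  ∃ k : ℕ → ℕ, k 0 = 0 ∧ StrictMono k ∧
    ∀ n, y n ∈ convexHull ℝ (x '' Set.Ico (k n) (k (n + 1)))

variable (X : Type*) [NormedAddCommGroup X] [NormedSpace ℝ X]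

/-- A set is weakly compact if its image in the weak topology is compact. -/
def WeaklyCompact (K : Set X) : Prop := IsCompact (toWeakSpace ℝ X '' K)

/-- A sequence is weakly null. -/
def WeaklyNull (x : ℕ → X) : Prop :=
  ∀ f : X →L[ℝ] ℝ, Tendsto (fun n => f (x n)) atTop (𝓝 0)

/-- A sequence in the dual is weak* null. -/
def WeakStarNull (f : ℕ → X →L[ℝ] ℝ) : Prop :=
  ∀ x : X, Tendsto (fun n => f n x) atTop (𝓝 0)

/-- A sequence in the dual is weak* Cauchy. -/
def WeakStarCauchy (f : ℕ → X →L[ℝ] ℝ) : Prop :=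
  ∀ x : X, ∃ L : ℝ, Tendsto (fun n => f n x) atTop (𝓝 L)

variable {X}

/-- α((f_n)) = sup over weakly compact K ⊆ B_X of limsup_n sup_{x ∈ K} |⟨f_n, x⟩|. -/
def alphaQ (f : ℕ → X →L[ℝ] ℝ) : ℝ :=
  sSup { r | ∃ K : Set X, K ⊆ closedBall 0 1 ∧ WeaklyCompact X K ∧
    r = limsup (fun n => sSup ((fun x => |f n x|) '' K)) atTop }

/-- β((f_n)) = sup over weakly null (x_n) in B_X of limsup_n |⟨f_n, x_n⟩|. -/
def betaQ (f : ℕ → X →L[ℝ] ℝ) : ℝ :=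
  sSup { r | ∃ x : ℕ → X, (∀ n, x n ∈ closedBall (0 : X) 1) ∧ WeaklyNull X x ∧
    r = limsup (fun n => |f n (x n)|) atTop }

/-- ca_{ρ*}((f_n)): measures Mackey-Cauchyness. -/
def caRho (f : ℕ → X →L[ℝ] ℝ) : ℝ :=
  sSup { r | ∃ K : Set X, K ⊆ closedBall 0 1 ∧ WeaklyCompact X K ∧
    r = ⨅ n : ℕ, sSup { t | ∃ k ≥ n, ∃ l ≥ n, ∃ x ∈ K, t = |(f k - f l) x| } }

/-- ca((z_n)) = inf_n sup_{k,l ≥ n} ‖z_k - z_l‖. -/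
def caSeq {E : Type*} [NormedAddCommGroup E] (z : ℕ → E) : ℝ :=
  ⨅ n : ℕ, sSup { r | ∃ k ≥ n, ∃ l ≥ n, r = ‖z k - z l‖ }

variable (X)

def K1 : ℝ :=
  sSup { r | ∃ f : ℕ → X →L[ℝ] ℝ, (∀ n, ‖f n‖ ≤ 1) ∧ WeakStarNull X f ∧
    r = sInf { s | ∃ g, IsConvexBlock f g ∧ s = alphaQ g } }

def K2 : ℝ :=
  sSup { r | ∃ f : ℕ → X →L[ℝ] ℝ, (∀ n, ‖f n‖ ≤ 1) ∧ WeakStarNull X f ∧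
    r = sInf { s | ∃ g, IsConvexBlock f g ∧ s = betaQ g } }

def K3 : ℝ :=
  sSup { r | ∃ f : ℕ → X →L[ℝ] ℝ, (∀ n, ‖f n‖ ≤ 1) ∧ WeakStarCauchy X f ∧
    r = sInf { s | ∃ g, IsConvexBlock f g ∧ s = caRho g } }

/-- Property (K). -/
def PropertyK : Prop :=
  ∀ f : ℕ → X →L[ℝ] ℝ, WeakStarNull X f → ∃ g, IsConvexBlock f g ∧ alphaQ g = 0

/-- The Grothendieck property: every weak* null sequence in the dual is weakly null. -/
def Grothendieck : Prop :=
  ∀ f : ℕ → X →L[ℝ] ℝ, WeakStarNull X f →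
    ∀ Φ : (X →L[ℝ] ℝ) →L[ℝ] ℝ, Tendsto (fun n => Φ (f n)) atTop (𝓝 0)

def GQ : ℝ :=
  sSup { r | ∃ f : ℕ → X →L[ℝ] ℝ, (∀ n, ‖f n‖ ≤ 1) ∧ WeakStarNull X f ∧
    r = sInf { s | ∃ g, IsConvexBlock f g ∧ s = limsup (fun n => ‖g n‖) atTop } }

def RQ : ℝ :=
  sSup { r | ∃ x : ℕ → X, (∀ n, x n ∈ closedBall (0 : X) 1) ∧
    r = sInf { s | ∃ z, IsConvexBlock x z ∧ s = caSeq z } }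

/-- weak* cluster points in the bidual of a sequence in the bidual. -/
def WStarClusterPts (u : ℕ → (X →L[ℝ] ℝ) →L[ℝ] ℝ) : Set ((X →L[ℝ] ℝ) →L[ℝ] ℝ) :=
  { z | MapClusterPt (StrongDual.toWeakDual (𝕜 := ℝ) z) atTop
      (fun n => StrongDual.toWeakDual (𝕜 := ℝ) (u n)) }

def wckQ (A : Set X) : ℝ :=
  sSup { r | ∃ x : ℕ → X, (∀ n, x n ∈ A) ∧
    r = sInf { s | ∃ z ∈ WStarClusterPts X (fun n => inclusionInDoubleDual ℝ X (x n)),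
      ∃ v : X, s = ‖z - inclusionInDoubleDual ℝ X v‖ } }

instance : Fact ((1 : ENNReal) ≤ 1) := ⟨le_rfl⟩

/-!
`RQ X ≤ 2` because every sequence in the unit ball is a convex block sequence of itself.
For the lower bound, a sequence `u` in the unit ball with `(1 - ε) ∑ |tⱼ| ≤ ‖∑ tⱼ uⱼ‖`
passes this estimate on to each of its convex block sequences `z` (the blocks are disjoint and
the weights sum to 1), so `‖z k - z l‖ ≥ 2 (1 - ε)` for `k ≠ l`, whence `ca(z) ≥ 2 (1 - ε)`.

Such `u` exist by James' distortion argument applied to `vᵢ = T eᵢ`: the best lower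
ℓ₁-constant `l1TailConst v n` of `v` on combinations supported in `[n, ∞)` increases to some
`g > 0`. Choose `n₀` with `l1TailConst v n₀ > g - η`, and successive normalized blocks `Pⱼ`
beyond `n₀` with `‖Pⱼ‖ < g + η`; then `uⱼ = Pⱼ / ‖Pⱼ‖` satisfies the estimate with constant
`l1TailConst v n₀ / (g + η)`, which tends to 1 as `η / g → 0`.
-/

variable {X}

def HasLowerL1EstimateFrom (v : ℕ → X) (n : ℕ) (c : ℝ) : Prop :=
  ∀ (s : Finset ℕ) (a : ℕ → ℝ), (∀ i ∈ s, n ≤ i) → c * ∑ i ∈ s, |a i| ≤ ‖∑ i ∈ s, a i • v i‖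

theorem HasLowerL1EstimateFrom.sum_smul_blocks {v : ℕ → X} {n : ℕ} {c : ℝ}
    (hv : HasLowerL1EstimateFrom v n c) {F : Finset ℕ} {s : ℕ → Finset ℕ}
    (hs : (F : Set ℕ).PairwiseDisjoint s) (hsn : ∀ j ∈ F, ∀ i ∈ s j, n ≤ i)
    (b : ℕ → ℕ → ℝ) (t : ℕ → ℝ) :
    c * ∑ j ∈ F, |t j| * ∑ i ∈ s j, |b j i| ≤ ‖∑ j ∈ F, t j • ∑ i ∈ s j, b j i • v i‖ := by
  classical
  set A : ℕ → ℝ := fun i => ∑ j ∈ F, if i ∈ s j then t j * b j i else 0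
  have hA : ∀ j ∈ F, ∀ i ∈ s j, A i = t j * b j i := by
    intro j hj i hi
    refine (Finset.sum_eq_single_of_mem j hj fun j' hj' hne => if_neg fun hi' => ?_).trans
      (if_pos hi)
    exact Finset.disjoint_left.1 (hs hj' hj hne) hi' hi
  have hcomb : ∑ i ∈ F.biUnion s, A i • v i = ∑ j ∈ F, t j • ∑ i ∈ s j, b j i • v i := by
    rw [Finset.sum_biUnion hs]
    refine Finset.sum_congr rfl fun j hj => ?_
    rw [Finset.smul_sum]
    exact Finset.sum_congr rfl fun i hi => by rw [hA j hj i hi, mul_smul]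
  have hnorm : ∑ i ∈ F.biUnion s, |A i| = ∑ j ∈ F, |t j| * ∑ i ∈ s j, |b j i| := by
    rw [Finset.sum_biUnion hs]
    refine Finset.sum_congr rfl fun j hj => ?_
    rw [Finset.mul_sum]
    exact Finset.sum_congr rfl fun i hi => by rw [hA j hj i hi, abs_mul]
  rw [← hcomb, ← hnorm]
  refine hv _ _ fun i hi => ?_
  obtain ⟨j, hj, hi⟩ := Finset.mem_biUnion.1 hi
  exact hsn j hj i hi

theorem HasLowerL1EstimateFrom.two_mul_le_norm_sub {u : ℕ → X} {c : ℝ}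
    (hu : HasLowerL1EstimateFrom u 0 c) {k l : ℕ} (hkl : k ≠ l) : 2 * c ≤ ‖u k - u l‖ := by
  classical
  have := hu {k, l} (fun i => if i = k then 1 else -1) fun i _ => i.zero_le
  simpa [Finset.sum_pair hkl, hkl.symm, ← sub_eq_add_neg, mul_comm, one_add_one_eq_two]
    using this

section ConvexBlock

variable {E : Type*} [AddCommGroup E] [Module ℝ E]

theorem exists_weights_of_mem_convexHull_image {ι : Type*} {u : ι → E} {I : Finset ι} {y : E}
    (hy : y ∈ convexHull ℝ (u '' I)) :
    ∃ w : ι → ℝ, (∀ i ∈ I, 0 ≤ w i) ∧ ∑ i ∈ I, w i = 1 ∧ ∑ i ∈ I, w i • u i = y := by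
  classical
  refine convexHull_min (t := {y | ∃ w : ι → ℝ, (∀ i ∈ I, 0 ≤ w i) ∧ ∑ i ∈ I, w i = 1 ∧
    ∑ i ∈ I, w i • u i = y}) ?_ ?_ hy
  · rintro _ ⟨i, hi, rfl⟩
    refine ⟨Pi.single i 1, fun j _ => ?_, ?_, ?_⟩
    · by_cases h : j = i <;> simp [h]
    · simp [Finset.sum_pi_single', Finset.mem_coe.1 hi]
    · simp [Pi.single_apply, ite_smul, Finset.mem_coe.1 hi]
  · rintro _ ⟨w, hw0, hw1, rfl⟩ _ ⟨w', hw0', hw1', rfl⟩ a b ha hb hab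
    refine ⟨a • w + b • w', fun i hi => ?_, ?_, ?_⟩
    · exact add_nonneg (mul_nonneg ha (hw0 i hi)) (mul_nonneg hb (hw0' i hi))
    · simp [Finset.sum_add_distrib, ← Finset.mul_sum, hw1, hw1', hab]
    · simp [add_smul, mul_smul, Finset.sum_add_distrib, ← Finset.smul_sum]

theorem IsConvexBlock.mem_of_convex {u z : ℕ → E} {C : Set E} (hz : IsConvexBlock u z)
    (hC : Convex ℝ C) (hu : ∀ n, u n ∈ C) (n : ℕ) : z n ∈ C := by
  obtain ⟨k, -, -, hmem⟩ := hz
  exact convexHull_min (by rintro _ ⟨i, -, rfl⟩; exact hu i) hC (hmem n)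

theorem isConvexBlock_self (u : ℕ → E) : IsConvexBlock u u :=
  ⟨id, rfl, strictMono_id, fun n => subset_convexHull ℝ _ ⟨n, by simp, rfl⟩⟩

end ConvexBlock

open Function in
theorem HasLowerL1EstimateFrom.of_isConvexBlock {u z : ℕ → X} {c : ℝ}
    (hu : HasLowerL1EstimateFrom u 0 c) (hz : IsConvexBlock u z) :
    HasLowerL1EstimateFrom z 0 c := by
  obtain ⟨k, -, hk, hmem⟩ := hz
  choose w hw0 hw1 hwz using fun n =>
    exists_weights_of_mem_convexHull_image (I := Finset.Ico (k n) (k (n + 1)))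
      (by rw [Finset.coe_Ico]; exact hmem n)
  have hdisj : Pairwise (Disjoint on fun n => Finset.Ico (k n) (k (n + 1))) := fun m n hmn => by
    simpa [onFun, ← Finset.disjoint_coe] using
      hk.monotone.pairwise_disjoint_on_Ico_succ hmn
  have habs : ∀ n, ∑ i ∈ Finset.Ico (k n) (k (n + 1)), |w n i| = 1 := fun n => by
    rw [← hw1 n]
    exact Finset.sum_congr rfl fun i hi => abs_of_nonneg (hw0 n i hi)
  intro F t _
  simpa only [habs, mul_one, hwz] using
    hu.sum_smul_blocks (hdisj.set_pairwise F) (fun _ _ i _ => i.zero_le) w t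

section Cauchy

variable {E : Type*} [NormedAddCommGroup E]

theorem caSeq_nonneg (z : ℕ → E) : 0 ≤ caSeq z :=
  le_ciInf fun _ => Real.sSup_nonneg (by rintro _ ⟨k, -, l, -, rfl⟩; exact norm_nonneg _)

theorem caSeq_le {z : ℕ → E} {M : ℝ} (hM : ∀ k l, ‖z k - z l‖ ≤ M) : caSeq z ≤ M := by
  refine (ciInf_le ⟨0, ?_⟩ 0).trans (csSup_le ⟨_, 0, le_rfl, 0, le_rfl, rfl⟩ ?_)
  · rintro _ ⟨n, rfl⟩
    exact Real.sSup_nonneg (by rintro _ ⟨k, -, l, -, rfl⟩; exact norm_nonneg _)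
  · rintro _ ⟨k, -, l, -, rfl⟩
    exact hM k l

theorem le_caSeq {z : ℕ → E} {d M : ℝ} (hM : ∀ k l, ‖z k - z l‖ ≤ M)
    (hd : ∀ k l, k ≠ l → d ≤ ‖z k - z l‖) : d ≤ caSeq z :=
  le_ciInf fun n => (hd n (n + 1) n.succ_ne_self.symm).trans <|
    le_csSup ⟨M, by rintro _ ⟨k, -, l, -, rfl⟩; exact hM k l⟩ ⟨n, le_rfl, n + 1, n.le_succ, rfl⟩

end Cauchy

theorem norm_sub_le_two_of_isConvexBlock {x z : ℕ → X} (hx : ∀ n, x n ∈ closedBall (0 : X) 1)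
    (hz : IsConvexBlock x z) (k l : ℕ) : ‖z k - z l‖ ≤ 2 := by
  have hz1 : ∀ n, ‖z n‖ ≤ 1 := fun n =>
    mem_closedBall_zero_iff.1 (hz.mem_of_convex (convex_closedBall 0 1) hx n)
  simpa [one_add_one_eq_two] using norm_sub_le_of_le (hz1 k) (hz1 l)

theorem sInf_caSeq_le_two {x : ℕ → X} (hx : ∀ n, x n ∈ closedBall (0 : X) 1) :
    sInf { s | ∃ z, IsConvexBlock x z ∧ s = caSeq z } ≤ 2 := by
  have hbdd : BddBelow { s | ∃ z, IsConvexBlock x z ∧ s = caSeq z } := by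
    refine ⟨0, ?_⟩
    rintro _ ⟨z, -, rfl⟩
    exact caSeq_nonneg z
  exact (csInf_le hbdd ⟨x, isConvexBlock_self x, rfl⟩).trans
    (caSeq_le (norm_sub_le_two_of_isConvexBlock hx (isConvexBlock_self x)))

variable (X) in
theorem RQ_le_two : RQ X ≤ 2 :=
  Real.sSup_le (by rintro _ ⟨x, hx, rfl⟩; exact sInf_caSeq_le_two hx) zero_le_two

theorem two_mul_le_RQ {u : ℕ → X} {c : ℝ} (hu : ∀ n, u n ∈ closedBall (0 : X) 1)
    (hc : HasLowerL1EstimateFrom u 0 c) : 2 * c ≤ RQ X := by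
  refine le_trans ?_ (le_csSup ⟨2, ?_⟩ ⟨u, hu, rfl⟩)
  · refine le_csInf ⟨_, u, isConvexBlock_self u, rfl⟩ ?_
    rintro _ ⟨z, hz, rfl⟩
    exact le_caSeq (norm_sub_le_two_of_isConvexBlock hu hz) fun k l hkl =>
      (hc.of_isConvexBlock hz).two_mul_le_norm_sub hkl
  · rintro _ ⟨x, hx, rfl⟩
    exact sInf_caSeq_le_two hx

open Function in
theorem exists_successive_blocks {p : Finset ℕ → (ℕ → ℝ) → Prop}
    (h : ∀ n, ∃ s a, (∀ i ∈ s, n ≤ i) ∧ p s a) (n₀ : ℕ) :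
    ∃ (s : ℕ → Finset ℕ) (a : ℕ → ℕ → ℝ),
      Pairwise (Disjoint on s) ∧ (∀ j, ∀ i ∈ s j, n₀ ≤ i) ∧ ∀ j, p (s j) (a j) := by
  choose s a hs hp using h
  let k : ℕ → ℕ := fun j => Nat.rec n₀ (fun _ m => m + (s m).sup id + 1) j
  have hk : ∀ j, k (j + 1) = k j + (s (k j)).sup id + 1 := fun _ => rfl
  have hk_mono : StrictMono k := strictMono_nat_of_lt_succ fun j => by rw [hk]; omega
  have hlt : ∀ j, ∀ i ∈ s (k j), i < k (j + 1) := fun j i hi => by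
    have : i ≤ (s (k j)).sup id := Finset.le_sup (f := id) hi
    rw [hk]
    omega
  refine ⟨fun j => s (k j), fun j => a (k j), ?_,
    fun j i hi => (hk_mono.monotone j.zero_le).trans (hs _ i hi), fun j => hp _⟩
  intro j j' hne
  wlog hjj' : j < j' generalizing j j'
  · exact (this hne.symm (by omega)).symm
  exact Finset.disjoint_left.2 fun i hi hi' =>
    ((hlt j i hi).trans_le (hk_mono.monotone hjj')).not_ge (hs _ i hi')

section James

variable {v : ℕ → X} {n : ℕ}

def normalizedBlockNorms (v : ℕ → X) (n : ℕ) : Set ℝ :=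
  { r | ∃ (s : Finset ℕ) (a : ℕ → ℝ), (∀ i ∈ s, n ≤ i) ∧ ∑ i ∈ s, |a i| = 1 ∧
    r = ‖∑ i ∈ s, a i • v i‖ }

def l1TailConst (v : ℕ → X) (n : ℕ) : ℝ := sInf (normalizedBlockNorms v n)

theorem norm_mem_normalizedBlockNorms (v : ℕ → X) {n m : ℕ} (h : n ≤ m) :
    ‖v m‖ ∈ normalizedBlockNorms v n :=
  ⟨{m}, fun _ => 1, by simpa using h, by simp, by simp⟩

theorem bddBelow_normalizedBlockNorms : BddBelow (normalizedBlockNorms v n) := by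
  refine ⟨0, ?_⟩
  rintro _ ⟨s, a, -, -, rfl⟩
  exact norm_nonneg _

theorem l1TailConst_le_norm {m : ℕ} (h : n ≤ m) : l1TailConst v n ≤ ‖v m‖ :=
  csInf_le bddBelow_normalizedBlockNorms (norm_mem_normalizedBlockNorms v h)

theorem l1TailConst_mono : Monotone (l1TailConst v) := fun n m h => by
  refine csInf_le_csInf bddBelow_normalizedBlockNorms ⟨_, norm_mem_normalizedBlockNorms v le_rfl⟩ ?_
  rintro _ ⟨s, a, hs, ha, rfl⟩
  exact ⟨s, a, fun i hi => h.trans (hs i hi), ha, rfl⟩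

theorem HasLowerL1EstimateFrom.le_l1TailConst {c : ℝ} (hv : HasLowerL1EstimateFrom v n c) :
    c ≤ l1TailConst v n := by
  refine le_csInf ⟨_, norm_mem_normalizedBlockNorms v le_rfl⟩ ?_
  rintro _ ⟨s, a, hs, ha, rfl⟩
  simpa [ha] using hv s a hs

theorem hasLowerL1EstimateFrom_l1TailConst (v : ℕ → X) (n : ℕ) :
    HasLowerL1EstimateFrom v n (l1TailConst v n) := by
  intro s a hs
  rcases (Finset.sum_nonneg fun i _ => abs_nonneg (a i)).eq_or_lt with hσ | hσ
  · rw [← hσ, mul_zero]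
    exact norm_nonneg _
  set σ := ∑ i ∈ s, |a i|
  have hnormalized : ∑ i ∈ s, |σ⁻¹ * a i| = 1 := by
    simp_rw [abs_mul, abs_inv, abs_of_pos hσ, ← Finset.mul_sum]
    exact inv_mul_cancel₀ hσ.ne'
  have := csInf_le (bddBelow_normalizedBlockNorms (v := v) (n := n)) ⟨s, _, hs, hnormalized, rfl⟩
  simp_rw [mul_smul, ← Finset.smul_sum, norm_smul, norm_inv, Real.norm_of_nonneg hσ.le] at this
  rw [mul_comm]
  exact (le_inv_mul_iff₀ hσ).1 this

theorem exists_normalized_block_norm_lt {r : ℝ} (h : l1TailConst v n < r) :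
    ∃ (s : Finset ℕ) (a : ℕ → ℝ), (∀ i ∈ s, n ≤ i) ∧
      (∑ i ∈ s, |a i| = 1 ∧ ‖∑ i ∈ s, a i • v i‖ < r) := by
  obtain ⟨_, ⟨s, a, hs, ha, rfl⟩, hlt⟩ :=
    exists_lt_of_csInf_lt ⟨_, norm_mem_normalizedBlockNorms v le_rfl⟩ h
  exact ⟨s, a, hs, ha, hlt⟩

end James

theorem HasLowerL1EstimateFrom.exists_almost_isometric {v : ℕ → X} {c M : ℝ}
    (hv : HasLowerL1EstimateFrom v 0 c) (hc : 0 < c) (hM : ∀ n, ‖v n‖ ≤ M) {ε : ℝ}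
    (hε : 0 < ε) : ∃ u : ℕ → X, (∀ j, ‖u j‖ ≤ 1) ∧ HasLowerL1EstimateFrom u 0 (1 - ε) := by
  set g := ⨆ n, l1TailConst v n
  have hc_le : ∀ n, c ≤ l1TailConst v n := fun n =>
    hv.le_l1TailConst.trans (l1TailConst_mono n.zero_le)
  have hle_g : ∀ n, l1TailConst v n ≤ g := le_ciSup ⟨M, by
    rintro _ ⟨n, rfl⟩
    exact (l1TailConst_le_norm le_rfl).trans (hM n)⟩
  -- chosen so that `(1 - ε) (g + η) ≤ g - η`
  set η := ε * g / 2 with hη_def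
  have hη : 0 < η := by
    have := hc.trans_le ((hc_le 0).trans (hle_g 0))
    positivity
  obtain ⟨n₀, hn₀⟩ : ∃ n₀, g - η < l1TailConst v n₀ := exists_lt_of_lt_ciSup (sub_lt_self g hη)
  obtain ⟨s, b, hdisj, hsn, hb⟩ := exists_successive_blocks
    (fun n => exists_normalized_block_norm_lt ((hle_g n).trans_lt (lt_add_of_pos_right g hη))) n₀
  set P := fun j => ∑ i ∈ s j, b j i • v i
  have hP : ∀ j, c ≤ ‖P j‖ := fun j => by
    simpa [(hb j).1] using hv (s j) (b j) fun i _ => i.zero_le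
  have hP_pos : ∀ j, 0 < ‖P j‖ := fun j => hc.trans_le (hP j)
  have hratio : ∀ j, 1 - ε ≤ l1TailConst v n₀ * ‖P j‖⁻¹ := fun j => by
    rw [← div_eq_mul_inv, le_div_iff₀ (hP_pos j)]
    have hPj : ‖P j‖ < g + η := (hb j).2
    rcases le_or_gt ε 1 with h1 | h1
    · linarith [mul_le_mul_of_nonneg_left hPj.le (sub_nonneg.2 h1), mul_pos hε hη]
    · linarith [mul_pos (sub_pos.2 h1) (hP_pos j), hc_le n₀]
  refine ⟨fun j => ‖P j‖⁻¹ • P j, fun j => ?_, fun F t _ => ?_⟩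
  · rw [norm_smul, norm_inv, norm_norm, inv_mul_cancel₀ (hP_pos j).ne']
  have key := (hasLowerL1EstimateFrom_l1TailConst v n₀).sum_smul_blocks
    (hdisj.set_pairwise F) (fun j _ => hsn j) b fun j => t j * ‖P j‖⁻¹
  simp only [(hb _).1, mul_one, mul_smul] at key
  refine le_trans ?_ key
  rw [Finset.mul_sum, Finset.mul_sum]
  refine Finset.sum_le_sum fun j _ => ?_
  rw [abs_mul, abs_inv, abs_norm, mul_comm (|t j|), ← mul_assoc]
  exact mul_le_mul_of_nonneg_right (hratio j) (abs_nonneg _)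

theorem hasLowerL1EstimateFrom_lp_single {T : lp (fun _ : ℕ => ℝ) 1 →L[ℝ] X} {c : ℝ}
    (hT : ∀ v, c * ‖v‖ ≤ ‖T v‖) : HasLowerL1EstimateFrom (fun i => T (lp.single 1 i 1)) 0 c := by
  intro s a _
  have hnorm : ‖∑ i ∈ s, lp.single 1 i (a i)‖ = ∑ i ∈ s, |a i| := by
    simpa using lp.norm_sum_single (p := 1) (by norm_num) a s
  have hsum : ∑ i ∈ s, a i • T (lp.single 1 i 1) = T (∑ i ∈ s, lp.single 1 i (a i)) := by
    simp [map_sum, ← map_smul, ← lp.single_smul]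
  rw [hsum, ← hnorm]
  exact hT _

theorem norm_apply_lp_single_le (T : lp (fun _ : ℕ => ℝ) 1 →L[ℝ] X) (i : ℕ) :
    ‖T (lp.single 1 i 1)‖ ≤ ‖T‖ := by
  simpa using T.le_opNorm (lp.single 1 i 1)

theorem stmt15_general {X : Type*} [NormedAddCommGroup X] [NormedSpace ℝ X]
    (h : ∃ T : lp (fun _ : ℕ => ℝ) 1 →L[ℝ] X, ∃ c > (0 : ℝ), ∀ v, c * ‖v‖ ≤ ‖T v‖) :
    RQ X = 2 := by
  obtain ⟨T, c, hc, hT⟩ := h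
  refine (RQ_le_two X).antisymm (le_of_forall_pos_le_add fun ε hε => ?_)
  obtain ⟨u, hu, hu_low⟩ := (hasLowerL1EstimateFrom_lp_single hT).exists_almost_isometric hc
    (norm_apply_lp_single_le T) (half_pos hε)
  have := two_mul_le_RQ (fun n => mem_closedBall_zero_iff.2 (hu n)) hu_low
  linarith

theorem stmt15 {X : Type*} [NormedAddCommGroup X] [NormedSpace ℝ X] [CompleteSpace X]
    (h : ∃ T : lp (fun _ : ℕ => ℝ) 1 →L[ℝ] X, ∃ c > (0 : ℝ), ∀ v, c * ‖v‖ ≤ ‖T v‖) :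
    RQ X = 2 :=
  stmt15_general h
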